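/- Let ν ≥ 1, let D be a real diagonal ν×ν matrix, let A₀ be a real symmetric ν×ν matrix all of whose entries are nonnegative, and assume A₀ is irreducible in the sense that for all j ≠ k there exists a positive integer n with (A₀^n)_{jk} > 0. Let M be a Hermitian ν×ν complex matrix with |M_{jk}| ≤ (A₀)_{jk} for all j,k, and suppose there exist indices j₀, k₀ with |M_{j₀k₀}| < (A₀)_{j₀k₀}. Then λ₁(D − A₀) < λ₁(D − M). -/

import Mathlib

open Matrix
open scoped ComplexOrder

/-- The eigenvalues of a Hermitian matrix, listed in increasing order
(counted with multiplicity). -/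
noncomputable def eigs {ν : ℕ} {A : Matrix (Fin ν) (Fin ν) ℂ} (hA : A.IsHermitian) :
    Fin ν → ℝ :=
  hA.eigenvalues ∘ ⇑(Tuple.sort hA.eigenvalues)

lemma herm_of_real_symm {ν : ℕ} (A : Matrix (Fin ν) (Fin ν) ℝ) (hA : A.IsSymm) :
    (A.map fun x => (x : ℂ)).IsHermitian := by
  ext j k
  simp [Matrix.conjTranspose_apply, Matrix.map_apply, Complex.conj_ofReal, hA.apply]

lemma herm_diag_sub {ν : ℕ} (v : Fin ν → ℝ) {M : Matrix (Fin ν) (Fin ν) ℂ}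
    (hM : M.IsHermitian) :
    ((Matrix.diagonal fun j => (v j : ℂ)) - M).IsHermitian :=
  (Matrix.isHermitian_diagonal_of_self_adjoint _
    (by funext n; exact Complex.conj_ofReal (v n))).sub hM

lemma eigs_min {ν : ℕ} {B : Matrix (Fin ν) (Fin ν) ℂ} (hB : B.IsHermitian) (h0 : 0 < ν) :
    (∀ i, eigs hB ⟨0, h0⟩ ≤ hB.eigenvalues i) ∧
    ∃ i, eigs hB ⟨0, h0⟩ = hB.eigenvalues i := by
  unfold eigs
  constructor
  · intro i
    have := Tuple.monotone_sort hB.eigenvalues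
      (a := ⟨0, h0⟩) (b := (Tuple.sort hB.eigenvalues).symm i)
      (by exact Fin.mk_le_of_le_val (Nat.zero_le _))
    simpa using this
  · exact ⟨Tuple.sort hB.eigenvalues ⟨0, h0⟩, rfl⟩

lemma rayleigh_ge {ν : ℕ} {B : Matrix (Fin ν) (Fin ν) ℂ} (hB : B.IsHermitian) (h0 : 0 < ν)
    (x : Fin ν → ℂ) :
    eigs hB ⟨0, h0⟩ * (star x ⬝ᵥ x).re ≤ (star x ⬝ᵥ (B *ᵥ x)).re := by
  set U : Matrix (Fin ν) (Fin ν) ℂ := ↑(hB.eigenvectorUnitary) with hU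
  set y : Fin ν → ℂ := star U *ᵥ x with hy
  have hsy : star y = star x ᵥ* U := by
    rw [hy, star_mulVec, ← Matrix.star_eq_conjTranspose, star_star]
  have h1 : star x ⬝ᵥ (B *ᵥ x)
      = star y ⬝ᵥ ((diagonal ((RCLike.ofReal ∘ hB.eigenvalues : Fin ν → ℂ))) *ᵥ y) := by
    conv_lhs => rw [hB.spectral_theorem, Unitary.conjStarAlgAut_apply]
    rw [← mulVec_mulVec, ← mulVec_mulVec, dotProduct_mulVec, ← hsy, hy]
  have h2 : star y ⬝ᵥ y = star x ⬝ᵥ x := by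
    rw [hsy, hy, ← dotProduct_mulVec, mulVec_mulVec,
      (Matrix.mem_unitaryGroup_iff).mp hB.eigenvectorUnitary.2, one_mulVec]
  have hterm : ∀ i, ((star y) i * ((diagonal ((RCLike.ofReal ∘ hB.eigenvalues : Fin ν → ℂ))) *ᵥ y) i).re
      = hB.eigenvalues i * Complex.normSq (y i) := by
    intro i
    rw [mulVec_diagonal]
    simp only [Pi.star_apply, Function.comp_apply]
    have hcast : ((RCLike.ofReal (hB.eigenvalues i)) : ℂ) = Complex.ofReal (hB.eigenvalues i) :=
      rfl
    rw [hcast, show star (y i) = (starRingEnd ℂ) (y i) from rfl]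
    have : (starRingEnd ℂ) (y i) * (Complex.ofReal (hB.eigenvalues i) * y i)
        = Complex.ofReal (hB.eigenvalues i) * (y i * (starRingEnd ℂ) (y i)) := by ring
    rw [this, Complex.mul_conj]
    simp
  have hdotre : (star y ⬝ᵥ ((diagonal ((RCLike.ofReal ∘ hB.eigenvalues : Fin ν → ℂ))) *ᵥ y)).re
      = ∑ i, hB.eigenvalues i * Complex.normSq (y i) := by
    rw [dotProduct, Complex.re_sum]
    exact Finset.sum_congr rfl fun i _ => hterm i
  have hnorm : (star x ⬝ᵥ x).re = ∑ i, Complex.normSq (y i) := by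
    rw [← h2, dotProduct, Complex.re_sum]
    refine Finset.sum_congr rfl fun i _ => ?_
    simp [Complex.normSq_apply]
  rw [h1, hdotre, hnorm, Finset.mul_sum]
  refine Finset.sum_le_sum fun i _ => ?_
  exact mul_le_mul_of_nonneg_right ((eigs_min hB h0).1 i) (Complex.normSq_nonneg _)

lemma dot_self_re {ν : ℕ} (v : Fin ν → ℂ) :
    (star v ⬝ᵥ v).re = ∑ j, Complex.normSq (v j) := by
  rw [dotProduct, Complex.re_sum]
  refine Finset.sum_congr rfl fun j _ => ?_
  simp [Complex.normSq_apply]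

lemma herm_quad_im {ν : ℕ} {P : Matrix (Fin ν) (Fin ν) ℂ} (hP : P.IsHermitian)
    (z : Fin ν → ℂ) : (star z ⬝ᵥ (P *ᵥ z)).im = 0 := by
  have h : star (star z ⬝ᵥ (P *ᵥ z)) = star z ⬝ᵥ (P *ᵥ z) := by
    calc star (star z ⬝ᵥ (P *ᵥ z)) = star (P *ᵥ z) ⬝ᵥ z := by
          rw [← star_dotProduct]
      _ = (star z ᵥ* Pᴴ) ⬝ᵥ z := by rw [star_mulVec]
      _ = star z ⬝ᵥ (Pᴴ *ᵥ z) := by rw [dotProduct_mulVec]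
      _ = star z ⬝ᵥ (P *ᵥ z) := by rw [hP.eq]
  have := congrArg Complex.im h
  simp only [Complex.star_def, Complex.conj_im] at this
  linarith

lemma quad_re {ν : ℕ} (D : Fin ν → ℝ) (N : Matrix (Fin ν) (Fin ν) ℂ) (v : Fin ν → ℂ) :
    (star v ⬝ᵥ (((Matrix.diagonal fun j => (D j : ℂ)) - N) *ᵥ v)).re
      = ∑ j, D j * Complex.normSq (v j)
        - ∑ j, ∑ k, ((starRingEnd ℂ) (v j) * N j k * v k).re := by
  rw [sub_mulVec, dotProduct_sub, Complex.sub_re]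
  congr 1
  · rw [dotProduct, Complex.re_sum]
    refine Finset.sum_congr rfl fun j _ => ?_
    rw [mulVec_diagonal]
    have h1 : star v j * ((D j : ℂ) * v j) = (D j : ℂ) * (v j * (starRingEnd ℂ) (v j)) := by
      simp only [Pi.star_apply, Complex.star_def]; ring
    rw [h1, Complex.mul_conj]
    simp
  · rw [dotProduct, Complex.re_sum]
    refine Finset.sum_congr rfl fun j _ => ?_
    rw [mulVec, dotProduct, Finset.mul_sum, Complex.re_sum]
    refine Finset.sum_congr rfl fun k _ => ?_
    congr 1
    simp only [Pi.star_apply, Complex.star_def]; ring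

/-- if in addition `A₀` is irreducible and `|Mⱼ₀ₖ₀| < (A₀)ⱼ₀ₖ₀` for some
entry, then the inequality at the bottom of the spectrum is strict:
`λ₁(D − A₀) < λ₁(D − M)`. -/
theorem first_band_nondegenerate (ν : ℕ) (hν : 1 ≤ ν)
    (D : Fin ν → ℝ) (A₀ : Matrix (Fin ν) (Fin ν) ℝ)
    (hA₀symm : A₀.IsSymm) (hA₀pos : ∀ j k, 0 ≤ A₀ j k)
    (hirr : ∀ j k : Fin ν, j ≠ k → ∃ n : ℕ, 0 < n ∧ 0 < (A₀ ^ n) j k)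
    (M : Matrix (Fin ν) (Fin ν) ℂ) (hM : M.IsHermitian)
    (hle : ∀ j k, ‖M j k‖ ≤ A₀ j k)
    (j₀ k₀ : Fin ν) (hlt : ‖M j₀ k₀‖ < A₀ j₀ k₀) :
    eigs (herm_diag_sub D (herm_of_real_symm A₀ hA₀symm)) ⟨0, by omega⟩ <
      eigs (herm_diag_sub D hM) ⟨0, by omega⟩ := by
  have h0 : 0 < ν := hν
  show eigs (herm_diag_sub D (herm_of_real_symm A₀ hA₀symm)) ⟨0, h0⟩ <
      eigs (herm_diag_sub D hM) ⟨0, h0⟩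
  set lam : ℝ := eigs (herm_diag_sub D (herm_of_real_symm A₀ hA₀symm)) ⟨0, h0⟩ with hlam
  set mu : ℝ := eigs (herm_diag_sub D hM) ⟨0, h0⟩ with hmu
  obtain ⟨i, hi⟩ := (eigs_min (herm_diag_sub D hM) h0).2
  set x : Fin ν → ℂ := ⇑((herm_diag_sub D hM).eigenvectorBasis i) with hxdef
  have hHx : ((Matrix.diagonal fun j => (D j : ℂ)) - M) *ᵥ x
      = (herm_diag_sub D hM).eigenvalues i • x :=
    (herm_diag_sub D hM).mulVec_eigenvectorBasis i
  -- x is a unit vector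
  have hx1 : ∑ j, Complex.normSq (x j) = 1 := by
    have hn : ‖(herm_diag_sub D hM).eigenvectorBasis i‖ = 1 :=
      (herm_diag_sub D hM).eigenvectorBasis.orthonormal.1 i
    have he := EuclideanSpace.norm_eq ((herm_diag_sub D hM).eigenvectorBasis i)
    rw [hn] at he
    have h2 : ∑ j, ‖x j‖ ^ 2 = 1 := Real.sqrt_eq_one.mp he.symm
    rw [← h2]
    refine Finset.sum_congr rfl fun j _ => ?_
    rw [← Complex.sq_norm]
  set y : Fin ν → ℝ := fun j => ‖x j‖ with hydef
  set yc : Fin ν → ℂ := fun j => ((y j : ℝ) : ℂ) with hycdef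
  have hy0 : ∀ j, 0 ≤ y j := fun j => norm_nonneg _
  have hyx : ∀ j, Complex.normSq (yc j) = Complex.normSq (x j) := by
    intro j
    rw [hycdef]
    rw [Complex.normSq_ofReal, hydef]
    rw [← Complex.sq_norm (x j), sq]
  -- the quadratic form value at x is mu
  have hmure : (star x ⬝ᵥ (((Matrix.diagonal fun j => (D j : ℂ)) - M) *ᵥ x)).re = mu := by
    rw [hHx, dotProduct_smul]
    have : ((herm_diag_sub D hM).eigenvalues i) • (star x ⬝ᵥ x)
        = (((herm_diag_sub D hM).eigenvalues i : ℝ) : ℂ) * (star x ⬝ᵥ x) := by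
      rw [Complex.real_smul]
    rw [this, Complex.re_ofReal_mul, dot_self_re, hx1, mul_one, hmu, hi]
  have hxquad := quad_re D M x
  -- quadratic form at yc
  have hycterm : ∀ j k, ((starRingEnd ℂ) (yc j) * (A₀.map fun x : ℝ => (x : ℂ)) j k * yc k).re
      = A₀ j k * (y j * y k) := by
    intro j k
    rw [hycdef]
    simp only [Matrix.map_apply, Complex.conj_ofReal]
    rw [← Complex.ofReal_mul, ← Complex.ofReal_mul, Complex.ofReal_re]
    ring
  have hycquad : (star yc ⬝ᵥ (((Matrix.diagonal fun j => (D j : ℂ))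
        - (A₀.map fun x : ℝ => (x : ℂ))) *ᵥ yc)).re
      = ∑ j, D j * Complex.normSq (x j) - ∑ j, ∑ k, A₀ j k * (y j * y k) := by
    rw [quad_re]
    congr 1
    · exact Finset.sum_congr rfl fun j _ => by rw [hyx j]
    · exact Finset.sum_congr rfl fun j _ => Finset.sum_congr rfl fun k _ => hycterm j k
  have hycnorm : (star yc ⬝ᵥ yc).re = 1 := by
    rw [dot_self_re, Finset.sum_congr rfl fun j _ => hyx j, hx1]
  -- termwise comparison
  have hterm_le : ∀ j k, ((starRingEnd ℂ) (x j) * M j k * x k).re ≤ A₀ j k * (y j * y k) := by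
    intro j k
    have h1 := Complex.re_le_norm ((starRingEnd ℂ) (x j) * M j k * x k)
    have h2 : ‖(starRingEnd ℂ) (x j) * M j k * x k‖
        = y j * ‖M j k‖ * y k := by
      simp only [norm_mul, Complex.norm_conj, hydef]
    nlinarith [hy0 j, hy0 k, norm_nonneg (M j k), hle j k,
      mul_nonneg (sub_nonneg.mpr (hle j k)) (mul_nonneg (hy0 j) (hy0 k))]
  -- lam ≤ R₀ ≤ mu
  have hRge : lam ≤ ∑ j, D j * Complex.normSq (x j) - ∑ j, ∑ k, A₀ j k * (y j * y k) := by
    have := rayleigh_ge (herm_diag_sub D (herm_of_real_symm A₀ hA₀symm)) h0 yc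
    rw [hycnorm, mul_one, hycquad] at this
    exact this
  have hsum_le : ∑ j, ∑ k, ((starRingEnd ℂ) (x j) * M j k * x k).re
      ≤ ∑ j, ∑ k, A₀ j k * (y j * y k) :=
    Finset.sum_le_sum fun j _ => Finset.sum_le_sum fun k _ => hterm_le j k
  have hmueq : mu = ∑ j, D j * Complex.normSq (x j)
      - ∑ j, ∑ k, ((starRingEnd ℂ) (x j) * M j k * x k).re := by
    rw [← hmure, hxquad]
  have hlam_le_mu : lam ≤ mu := by linarith
  -- suppose equality
  by_contra hcon
  push_neg at hcon
  have hlammu : lam = mu := le_antisymm hlam_le_mu hcon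
  have hReq : ∑ j, D j * Complex.normSq (x j) - ∑ j, ∑ k, A₀ j k * (y j * y k) = lam := by
    linarith
  -- the shifted matrix is positive semidefinite
  set P : Matrix (Fin ν) (Fin ν) ℂ :=
    (Matrix.diagonal fun j => ((D j - lam : ℝ) : ℂ)) - (A₀.map fun x : ℝ => (x : ℂ)) with hPdef
  have hPherm : P.IsHermitian := herm_diag_sub (fun j => D j - lam) (herm_of_real_symm A₀ hA₀symm)
  have hsplit : ∀ z : Fin ν → ℂ, ∑ j, (D j - lam) * Complex.normSq (z j)
      = ∑ j, D j * Complex.normSq (z j) - lam * ∑ j, Complex.normSq (z j) := by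
    intro z
    rw [Finset.mul_sum, ← Finset.sum_sub_distrib]
    exact Finset.sum_congr rfl fun j _ => by ring
  have hPpsd : P.PosSemidef := by
    refine Matrix.PosSemidef.of_dotProduct_mulVec_nonneg hPherm fun z => ?_
    rw [Complex.le_def]
    constructor
    · have e1 := quad_re (fun j => D j - lam) (A₀.map fun x : ℝ => (x : ℂ)) z
      have e2 := quad_re D (A₀.map fun x : ℝ => (x : ℂ)) z
      have e3 := rayleigh_ge (herm_diag_sub D (herm_of_real_symm A₀ hA₀symm)) h0 z
      have e4 := dot_self_re z
      rw [hPdef]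
      rw [e1, hsplit z]
      simp only [Complex.zero_re]
      rw [e2] at e3
      rw [e4] at e3
      linarith
    · rw [herm_quad_im hPherm z, Complex.zero_im]
  -- the quadratic form of P at yc vanishes
  have hPyc : star yc ⬝ᵥ (P *ᵥ yc) = 0 := by
    apply Complex.ext
    · have e1 := quad_re (fun j => D j - lam) (A₀.map fun x : ℝ => (x : ℂ)) yc
      have hsum1 : ∑ j, Complex.normSq (yc j) = 1 := by
        rw [Finset.sum_congr rfl fun j _ => hyx j]; exact hx1
      have hsum2 : ∑ j, D j * Complex.normSq (yc j) = ∑ j, D j * Complex.normSq (x j) :=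
        Finset.sum_congr rfl fun j _ => by rw [hyx j]
      rw [hPdef, e1, hsplit yc, hsum1, hsum2,
        Finset.sum_congr rfl (fun j _ => Finset.sum_congr rfl fun k _ => hycterm j k)]
      simp only [Complex.zero_re]
      linarith
    · rw [herm_quad_im hPherm yc, Complex.zero_im]
  have hPv : P *ᵥ yc = 0 := (hPpsd.dotProduct_mulVec_zero_iff yc).mp hPyc
  -- real eigenvalue equation for y
  have heig : ∀ j, (A₀ *ᵥ y) j = (D j - lam) * y j := by
    intro j
    have h1 := congrFun hPv j
    rw [hPdef, sub_mulVec] at h1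
    simp only [Pi.sub_apply, Pi.zero_apply, sub_eq_zero] at h1
    rw [mulVec_diagonal] at h1
    have h2 : ((A₀.map fun x : ℝ => (x : ℂ)) *ᵥ yc) j = (((A₀ *ᵥ y) j : ℝ) : ℂ) := by
      rw [mulVec, dotProduct, mulVec, dotProduct]
      push_cast
      rfl
    rw [h2, hycdef] at h1
    have h3 : (((D j - lam) * y j : ℝ) : ℂ) = (((A₀ *ᵥ y) j : ℝ) : ℂ) := by
      rw [Complex.ofReal_mul]; exact h1
    exact (Complex.ofReal_inj.mp h3).symm
  -- y is strictly positive (Perron-Frobenius)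
  have hyex : ∃ m, 0 < y m := by
    by_contra hc
    push_neg at hc
    have hz : ∀ j, Complex.normSq (x j) = 0 := by
      intro j
      have hj : y j = 0 := le_antisymm (hc j) (hy0 j)
      rw [← Complex.sq_norm]
      rw [hydef] at hj
      simp only at hj
      rw [hj]
      norm_num
    rw [Finset.sum_congr rfl fun j _ => hz j] at hx1
    simp at hx1
  have hclosed : ∀ k, y k = 0 → ∀ m, 0 < y m → A₀ k m = 0 := by
    intro k hk m hm
    have h1 : (A₀ *ᵥ y) k = 0 := by rw [heig k, hk, mul_zero]
    rw [mulVec, dotProduct] at h1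
    have h2 : ∀ l ∈ Finset.univ, (0:ℝ) ≤ A₀ k l * y l :=
      fun l _ => mul_nonneg (hA₀pos k l) (hy0 l)
    have h3 := (Finset.sum_eq_zero_iff_of_nonneg h2).mp h1 m (Finset.mem_univ m)
    rcases mul_eq_zero.mp h3 with h | h
    · exact h
    · exact absurd h (ne_of_gt hm)
  have hpow : ∀ n k m, y k = 0 → 0 < y m → (A₀ ^ (n + 1)) k m = 0 := by
    intro n
    induction n with
    | zero => intro k m hk hm; rw [pow_one]; exact hclosed k hk m hm
    | succ n ih =>
      intro k m hk hm
      rw [pow_succ', Matrix.mul_apply]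
      apply Finset.sum_eq_zero
      intro l _
      rcases eq_or_lt_of_le (hy0 l) with h | h
      · rw [ih l m h.symm hm, mul_zero]
      · rw [hclosed k hk l h, zero_mul]
  have hypos : ∀ k, 0 < y k := by
    intro k
    rcases eq_or_lt_of_le (hy0 k) with h | h
    · exfalso
      obtain ⟨m, hm⟩ := hyex
      have hkm : k ≠ m := by
        rintro rfl
        rw [← h] at hm
        exact lt_irrefl _ hm
      obtain ⟨n, hn, hpos⟩ := hirr k m hkm
      obtain ⟨n', rfl⟩ : ∃ n', n = n' + 1 := ⟨n - 1, by omega⟩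
      rw [hpow n' k m h.symm hm] at hpos
      exact lt_irrefl _ hpos
    · exact h
  -- strict inequality between the sums
  have hstrict : ∑ j, ∑ k, ((starRingEnd ℂ) (x j) * M j k * x k).re
      < ∑ j, ∑ k, A₀ j k * (y j * y k) := by
    apply Finset.sum_lt_sum
    · intro j _
      exact Finset.sum_le_sum fun k _ => hterm_le j k
    · refine ⟨j₀, Finset.mem_univ _, ?_⟩
      apply Finset.sum_lt_sum
      · intro k _
        exact hterm_le j₀ k
      · refine ⟨k₀, Finset.mem_univ _, ?_⟩
        have h1 := Complex.re_le_norm ((starRingEnd ℂ) (x j₀) * M j₀ k₀ * x k₀)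
        have h2 : ‖(starRingEnd ℂ) (x j₀) * M j₀ k₀ * x k₀‖
            = y j₀ * ‖M j₀ k₀‖ * y k₀ := by
          simp only [norm_mul, Complex.norm_conj, hydef]
        nlinarith [hypos j₀, hypos k₀, mul_pos (hypos j₀) (hypos k₀),
          mul_pos (sub_pos.mpr hlt) (mul_pos (hypos j₀) (hypos k₀))]
  linarith
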